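/- Let N ∈ (1,∞) and K ∈ ℝ. A continuous function h : I → (0,∞) on an interval I satisfies the midpoint inequality h((t₀+t₁)/2)^{1/(N−1)} ≥ σ_{K,N−1}^{(1/2)}(t₁−t₀)[h(t₀)^{1/(N−1)} + h(t₁)^{1/(N−1)}] for all t₀ < t₁ in I, if and only if it satisfies the full convexity inequality h((1−s)t₀+s t₁)^{1/(N−1)} ≥ σ_{K,N−1}^{(1−s)}(t₁−t₀) h(t₀)^{1/(N−1)} + σ_{K,N−1}^{(s)}(t₁−t₀) h(t₁)^{1/(N−1)} for all t₀ < t₁ in I and all s ∈ [0,1]. -/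

import Mathlib

/-! In the regime `Kθ² < N'π²`, which the midpoint inequality forces, the coefficients are real
and satisfy `σ^{(1/2)}((s'-s)θ) (σ^{(s)}(θ) + σ^{(s')}(θ)) = σ^{((s+s')/2)}(θ)` (the
sum-to-product formula for `sin`, resp. `sinh`). So along a segment `[t₀, t₁]` the comparison
function `s ↦ σ^{(1-s)}(θ) u(t₀) + σ^{(s)}(θ) u(t₁)` satisfies the midpoint inequality with
equality, and the set of `s ∈ [0,1]` where it lies below `u` is closed, contains `0` and `1`,
and is closed under midpoints; such a set is all of `[0,1]`. -/

open scoped ENNReal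

/-- The distortion coefficients σ_{K,N'}^{(s)}(θ), valued in [0,∞] (⊤ when Kθ² ≥ N'π²). -/
noncomputable def sigmaCoeff (K N' s θ : ℝ) : ℝ≥0∞ :=
  if N' * Real.pi ^ 2 ≤ K * θ ^ 2 then ⊤
  else if 0 < K * θ ^ 2 then
    ENNReal.ofReal (Real.sin (s * θ * Real.sqrt (K / N')) / Real.sin (θ * Real.sqrt (K / N')))
  else if K * θ ^ 2 = 0 then ENNReal.ofReal s
  else
    ENNReal.ofReal (Real.sinh (s * θ * Real.sqrt (-K / N')) / Real.sinh (θ * Real.sqrt (-K / N')))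

open Real Set

noncomputable def sigmaReal (K N' s θ : ℝ) : ℝ :=
  if 0 < K then sin (s * θ * √(K / N')) / sin (θ * √(K / N'))
  else if K = 0 then s
  else sinh (s * θ * √(-K / N')) / sinh (θ * √(-K / N'))

theorem Icc_subset_of_isClosed_of_midpoint_mem {S : Set ℝ} {a b : ℝ} (hS : IsClosed S)
    (ha : a ∈ S) (hb : b ∈ S)
    (hmid : ∀ x ∈ S, ∀ y ∈ S, a ≤ x → x < y → y ≤ b → (x + y) / 2 ∈ S) :
    Icc a b ⊆ S := by
  -- For `r ∉ S`, the points of `S` nearest to `r` on either side have their midpoint in `S`.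
  intro r ⟨har, hrb⟩
  by_contra hr
  obtain ⟨x, ⟨⟨hax, hxr⟩, hxS⟩, hx⟩ :=
    (isCompact_Icc.inter_right hS).exists_isGreatest ⟨a, ⟨le_rfl, har⟩, ha⟩
  obtain ⟨y, ⟨⟨hry, hyb⟩, hyS⟩, hy⟩ :=
    (isCompact_Icc.inter_right hS).exists_isLeast ⟨b, ⟨hrb, le_rfl⟩, hb⟩
  have hxr' : x < r := lt_of_le_of_ne hxr (by rintro rfl; exact hr hxS)
  have hry' : r < y := lt_of_le_of_ne hry (by rintro rfl; exact hr hyS)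
  have hm := hmid x hxS y hyS hax (by linarith) hyb
  rcases le_total ((x + y) / 2) r with hmr | hrm
  · have := hx ⟨⟨by linarith, hmr⟩, hm⟩
    linarith
  · have := hy ⟨⟨hrm, by linarith⟩, hm⟩
    linarith

theorem sin_div_sin_two_mul_mul_sin_sub_add_sin_add {a b : ℝ} (hb : sin (2 * b) ≠ 0) :
    sin b / sin (2 * b) * (sin (a - b) + sin (a + b)) = sin a := by
  rw [sin_two_mul] at hb ⊢
  have hsin : sin b ≠ 0 := fun h => hb (by rw [h]; ring)
  have hcos : cos b ≠ 0 := fun h => hb (by rw [h]; ring)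
  rw [sin_sub, sin_add]
  field_simp
  ring

theorem sinh_div_sinh_two_mul_mul_sinh_sub_add_sinh_add {a b : ℝ} (hb : b ≠ 0) :
    sinh b / sinh (2 * b) * (sinh (a - b) + sinh (a + b)) = sinh a := by
  have hsinh : sinh b ≠ 0 := sinh_ne_zero.2 hb
  have hcosh : cosh b ≠ 0 := (cosh_pos b).ne'
  rw [two_mul, sinh_add, sinh_sub, sinh_add]
  field_simp
  ring

theorem mul_sqrt_div_lt_pi {K N' θ : ℝ} (hN' : 0 < N') (hK : 0 < K)
    (hKθ : K * θ ^ 2 < N' * π ^ 2) : θ * √(K / N') < π := by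
  refine lt_of_pow_lt_pow_left₀ 2 pi_pos.le ?_
  rw [mul_pow, sq_sqrt (div_pos hK hN').le, mul_div_assoc', div_lt_iff₀ hN']
  linarith

theorem mul_mul_sq_lt {K N' θ q : ℝ} (hN' : 0 < N') (hq₀ : 0 ≤ q) (hq₁ : q ≤ 1)
    (hKθ : K * θ ^ 2 < N' * π ^ 2) : K * (q * θ) ^ 2 < N' * π ^ 2 := by
  rcases le_or_gt K 0 with hK | hK
  · nlinarith [mul_pos hN' (pow_pos pi_pos 2), sq_nonneg (q * θ)]
  · have : q ^ 2 ≤ 1 := pow_le_one₀ hq₀ hq₁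
    nlinarith [sq_nonneg θ, mul_nonneg hK.le (sq_nonneg θ)]

theorem sigmaCoeff_eq_ofReal {K N' θ : ℝ} (hθ : 0 < θ)
    (hKθ : K * θ ^ 2 < N' * π ^ 2) (s : ℝ) :
    sigmaCoeff K N' s θ = ENNReal.ofReal (sigmaReal K N' s θ) := by
  have hθ2 : 0 < θ ^ 2 := by positivity
  rw [sigmaCoeff, sigmaReal, if_neg hKθ.not_ge]
  rcases lt_trichotomy K 0 with hK | rfl | hK
  · rw [if_neg (by nlinarith), if_neg (by nlinarith), if_neg hK.not_gt, if_neg hK.ne]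
  · simp
  · rw [if_pos (by positivity), if_pos hK]

theorem sigmaCoeff_eq_top {K N' s θ : ℝ} (hKθ : N' * π ^ 2 ≤ K * θ ^ 2) :
    sigmaCoeff K N' s θ = ⊤ :=
  if_pos hKθ

theorem sigmaReal_nonneg {K N' θ s : ℝ} (hN' : 0 < N') (hθ : 0 < θ)
    (hKθ : K * θ ^ 2 < N' * π ^ 2) (hs₀ : 0 ≤ s) (hs₁ : s ≤ 1) : 0 ≤ sigmaReal K N' s θ := by
  rw [sigmaReal]
  split_ifs with hK hK0
  · have hlt := mul_sqrt_div_lt_pi hN' hK hKθ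
    have hpos : 0 < θ * √(K / N') := mul_pos hθ (sqrt_pos.2 (div_pos hK hN'))
    rw [mul_assoc]
    exact div_nonneg (sin_nonneg_of_nonneg_of_le_pi (by positivity) (by nlinarith))
      (sin_pos_of_pos_of_lt_pi hpos hlt).le
  · exact hs₀
  · exact div_nonneg (sinh_nonneg_iff.2 (by positivity)) (sinh_nonneg_iff.2 (by positivity))

theorem sigmaReal_zero (K N' θ : ℝ) : sigmaReal K N' 0 θ = 0 := by
  rw [sigmaReal]; split_ifs <;> simp

theorem sigmaReal_one {K N' θ : ℝ} (hN' : 0 < N') (hθ : 0 < θ)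
    (hKθ : K * θ ^ 2 < N' * π ^ 2) : sigmaReal K N' 1 θ = 1 := by
  rw [sigmaReal]
  split_ifs with hK hK0
  · have hpos : 0 < θ * √(K / N') := mul_pos hθ (sqrt_pos.2 (div_pos hK hN'))
    rw [one_mul, div_self (sin_pos_of_pos_of_lt_pi hpos (mul_sqrt_div_lt_pi hN' hK hKθ)).ne']
  · rfl
  · have hK' : 0 < -K / N' := div_pos (neg_pos.2 (lt_of_le_of_ne (not_lt.1 hK) hK0)) hN'
    rw [one_mul, div_self (sinh_pos_iff.2 (mul_pos hθ (sqrt_pos.2 hK'))).ne']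

@[fun_prop]
theorem continuous_sigmaReal (K N' θ : ℝ) : Continuous fun s => sigmaReal K N' s θ := by
  unfold sigmaReal
  split_ifs
  · exact (continuous_sin.comp (by fun_prop)).div_const _
  · exact continuous_id
  · exact (continuous_sinh.comp (by fun_prop)).div_const _

theorem sigmaReal_half_mul_add {K N' θ s s' : ℝ} (hN' : 0 < N') (hθ : 0 < θ)
    (hKθ : K * θ ^ 2 < N' * π ^ 2) (hss' : s < s') (hs's : s' - s ≤ 1) :
    sigmaReal K N' (1 / 2) ((s' - s) * θ) * (sigmaReal K N' s θ + sigmaReal K N' s' θ) =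
      sigmaReal K N' ((s + s') / 2) θ := by
  rcases lt_trichotomy K 0 with hK | rfl | hK
  · simp only [sigmaReal, if_neg hK.not_gt, if_neg hK.ne]
    have hc : 0 < √(-K / N') := sqrt_pos.2 (div_pos (neg_pos.2 hK) hN')
    have key := sinh_div_sinh_two_mul_mul_sinh_sub_add_sinh_add
      (a := (s + s') / 2 * θ * √(-K / N')) (b := (s' - s) / 2 * θ * √(-K / N'))
      (by have : 0 < s' - s := sub_pos.2 hss'; positivity)
    rw [← add_div, ← mul_div_assoc, ← key]
    ring_nf
  · simp only [sigmaReal, lt_irrefl, if_false, if_true]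
    ring
  · simp only [sigmaReal, if_pos hK]
    have hc : 0 < √(K / N') := sqrt_pos.2 (div_pos hK hN')
    have hlt := mul_sqrt_div_lt_pi hN' hK hKθ
    have key := sin_div_sin_two_mul_mul_sin_sub_add_sin_add
      (a := (s + s') / 2 * θ * √(K / N')) (b := (s' - s) / 2 * θ * √(K / N'))
      (by
        have : 0 < s' - s := sub_pos.2 hss'
        refine (sin_pos_of_pos_of_lt_pi (by positivity) ?_).ne'
        calc 2 * ((s' - s) / 2 * θ * √(K / N')) = (s' - s) * (θ * √(K / N')) := by ring
          _ ≤ 1 * (θ * √(K / N')) := by gcongr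
          _ < π := by rwa [one_mul])
    rw [← add_div, ← mul_div_assoc, ← key]
    ring_nf

theorem sigmaReal_interp_le_of_midpoint {K N' θ : ℝ} (hN' : 0 < N') (hθ : 0 < θ)
    (hKθ : K * θ ^ 2 < N' * π ^ 2) {g : ℝ → ℝ} (hg : ContinuousOn g (Icc 0 1))
    (hmid : ∀ a b, 0 ≤ a → a < b → b ≤ 1 →
      sigmaReal K N' (1 / 2) ((b - a) * θ) * (g a + g b) ≤ g ((a + b) / 2))
    {s : ℝ} (hs : s ∈ Icc (0 : ℝ) 1) :
    sigmaReal K N' (1 - s) θ * g 0 + sigmaReal K N' s θ * g 1 ≤ g s := by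
  set ℓ : ℝ → ℝ := fun s => sigmaReal K N' (1 - s) θ * g 0 + sigmaReal K N' s θ * g 1
  have hℓ : ∀ a b, a < b → b - a ≤ 1 →
      sigmaReal K N' (1 / 2) ((b - a) * θ) * (ℓ a + ℓ b) = ℓ ((a + b) / 2) := by
    intro a b hab hba
    have h₀ := sigmaReal_half_mul_add hN' hθ hKθ (s := 1 - b) (s' := 1 - a) (by linarith)
      (by linarith)
    have h₁ := sigmaReal_half_mul_add hN' hθ hKθ hab hba
    rw [show 1 - a - (1 - b) = b - a by ring, show (1 - b + (1 - a)) / 2 = 1 - (a + b) / 2 by ring]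
      at h₀
    simp only [ℓ, ← h₀, ← h₁]
    ring
  have hclosed : IsClosed {s ∈ Icc (0 : ℝ) 1 | ℓ s ≤ g s} :=
    isClosed_Icc.isClosed_le (Continuous.continuousOn (by fun_prop)) hg
  have hend : ∀ s ∈ ({0, 1} : Set ℝ), s ∈ {s ∈ Icc (0 : ℝ) 1 | ℓ s ≤ g s} := by
    rintro s (rfl | rfl) <;> simp [ℓ, sigmaReal_zero, sigmaReal_one hN' hθ hKθ]
  refine (Icc_subset_of_isClosed_of_midpoint_mem hclosed (hend 0 (by simp)) (hend 1 (by simp))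
    ?_ hs).2
  rintro a ⟨-, ha⟩ b ⟨-, hb⟩ ha₀ hab hb₁
  have hσ : 0 ≤ sigmaReal K N' (1 / 2) ((b - a) * θ) :=
    sigmaReal_nonneg hN' (by nlinarith) (mul_mul_sq_lt hN' (by linarith) (by linarith) hKθ)
      (by norm_num) (by norm_num)
  refine ⟨⟨by linarith, by linarith⟩, ?_⟩
  calc ℓ ((a + b) / 2) = sigmaReal K N' (1 / 2) ((b - a) * θ) * (ℓ a + ℓ b) :=
        (hℓ a b hab (by linarith)).symm
    _ ≤ sigmaReal K N' (1 / 2) ((b - a) * θ) * (g a + g b) := by gcongr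
    _ ≤ g ((a + b) / 2) := hmid a b ha₀ hab hb₁

theorem mul_sq_lt_of_sigmaCoeff_mul_le {K N' s θ : ℝ} {x y : ℝ≥0∞} (hx : x ≠ 0) (hy : y ≠ ⊤)
    (h : sigmaCoeff K N' s θ * x ≤ y) : K * θ ^ 2 < N' * π ^ 2 := by
  by_contra hKθ
  rw [sigmaCoeff_eq_top (not_lt.1 hKθ), ENNReal.top_mul hx, top_le_iff] at h
  exact hy h

theorem sigmaCoeff_interp_le_of_midpoint {K N' : ℝ} (hN' : 0 < N') {I : Set ℝ}
    (hI : Convex ℝ I) {u : ℝ → ℝ} (hu : ContinuousOn u I) (hpos : ∀ t ∈ I, 0 < u t)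
    (H : ∀ t₀ ∈ I, ∀ t₁ ∈ I, t₀ < t₁ →
      sigmaCoeff K N' (1 / 2) (t₁ - t₀) * (ENNReal.ofReal (u t₀) + ENNReal.ofReal (u t₁)) ≤
        ENNReal.ofReal (u ((t₀ + t₁) / 2)))
    {t₀ t₁ : ℝ} (ht₀ : t₀ ∈ I) (ht₁ : t₁ ∈ I) (ht : t₀ < t₁) {s : ℝ}
    (hs : s ∈ Icc (0 : ℝ) 1) :
    sigmaCoeff K N' (1 - s) (t₁ - t₀) * ENNReal.ofReal (u t₀) +
        sigmaCoeff K N' s (t₁ - t₀) * ENNReal.ofReal (u t₁) ≤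
      ENNReal.ofReal (u ((1 - s) * t₀ + s * t₁)) := by
  have hKθ : ∀ a ∈ I, ∀ b ∈ I, a < b → K * (b - a) ^ 2 < N' * π ^ 2 := fun a ha b hb hab =>
    mul_sq_lt_of_sigmaCoeff_mul_le (by simp [hpos a ha]) ENNReal.ofReal_ne_top (H a ha b hb hab)
  set γ : ℝ → ℝ := fun q => (1 - q) * t₀ + q * t₁
  have hγ : MapsTo γ (Icc 0 1) I := fun q hq => by
    simpa [γ, smul_eq_mul] using hI ht₀ ht₁ (sub_nonneg.2 hq.2) hq.1 (by ring)
  have hθ : 0 < t₁ - t₀ := sub_pos.2 ht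
  have hu₀ : 0 ≤ u t₀ := (hpos t₀ ht₀).le
  have hu₁ : 0 ≤ u t₁ := (hpos t₁ ht₁).le
  have hKθ₀₁ := hKθ t₀ ht₀ t₁ ht₁ ht
  have key := sigmaReal_interp_le_of_midpoint (g := u ∘ γ) hN' hθ hKθ₀₁
    (hu.comp (by fun_prop) hγ) ?_ hs
  · simp only [γ, Function.comp, sub_zero, one_mul, zero_mul, add_zero, sub_self, zero_add]
      at key
    have hσ₀ := sigmaReal_nonneg hN' hθ hKθ₀₁ (sub_nonneg.2 hs.2) (by linarith [hs.1])
    have hσ₁ := sigmaReal_nonneg hN' hθ hKθ₀₁ hs.1 hs.2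
    rw [sigmaCoeff_eq_ofReal hθ hKθ₀₁, sigmaCoeff_eq_ofReal hθ hKθ₀₁,
      ← ENNReal.ofReal_mul hσ₀, ← ENNReal.ofReal_mul hσ₁,
      ← ENNReal.ofReal_add (mul_nonneg hσ₀ hu₀) (mul_nonneg hσ₁ hu₁)]
    exact ENNReal.ofReal_le_ofReal key
  · intro a b ha hab hb
    have hγab : γ a < γ b := by simp only [γ]; nlinarith
    have hmid := H (γ a) (hγ ⟨ha, by linarith⟩) (γ b) (hγ ⟨by linarith, hb⟩) hγab
    have hKab := mul_mul_sq_lt hN' (sub_nonneg.2 hab.le) (by linarith) hKθ₀₁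
    rw [show γ b - γ a = (b - a) * (t₁ - t₀) by simp only [γ]; ring,
      show (γ a + γ b) / 2 = γ ((a + b) / 2) by simp only [γ]; ring,
      sigmaCoeff_eq_ofReal (mul_pos (sub_pos.2 hab) hθ) hKab,
      ← ENNReal.ofReal_add (hpos _ (hγ ⟨ha, by linarith⟩)).le (hpos _ (hγ ⟨by linarith, hb⟩)).le,
      ← ENNReal.ofReal_mul (sigmaReal_nonneg hN' (mul_pos (sub_pos.2 hab) hθ) hKab
        (by norm_num) (by norm_num)),
      ENNReal.ofReal_le_ofReal_iff (hpos _ (hγ ⟨by linarith, by linarith⟩)).le] at hmid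
    exact hmid

/-- for a continuous positive density on an interval, the midpoint σ-concavity
inequality is equivalent to the full CD(K,N) convexity inequality. -/
theorem stmt_18 (K N : ℝ) (hN : 1 < N) (I : Set ℝ) (hI : Convex ℝ I)
    (h : ℝ → ℝ) (hc : ContinuousOn h I) (hpos : ∀ t ∈ I, 0 < h t) :
    (∀ t₀ ∈ I, ∀ t₁ ∈ I, t₀ < t₁ →
      sigmaCoeff K (N - 1) (1 / 2) (t₁ - t₀) *
          (ENNReal.ofReal (h t₀ ^ (1 / (N - 1))) + ENNReal.ofReal (h t₁ ^ (1 / (N - 1)))) ≤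
        ENNReal.ofReal (h ((t₀ + t₁) / 2) ^ (1 / (N - 1)))) ↔
    (∀ t₀ ∈ I, ∀ t₁ ∈ I, t₀ < t₁ → ∀ s ∈ Set.Icc (0:ℝ) 1,
      sigmaCoeff K (N - 1) (1 - s) (t₁ - t₀) * ENNReal.ofReal (h t₀ ^ (1 / (N - 1))) +
          sigmaCoeff K (N - 1) s (t₁ - t₀) * ENNReal.ofReal (h t₁ ^ (1 / (N - 1))) ≤
        ENNReal.ofReal (h ((1 - s) * t₀ + s * t₁) ^ (1 / (N - 1)))) := by
  refine ⟨fun H t₀ ht₀ t₁ ht₁ ht s hs => ?_, fun H t₀ ht₀ t₁ ht₁ ht => ?_⟩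
  · exact sigmaCoeff_interp_le_of_midpoint (sub_pos.2 hN) hI
      (hc.rpow_const fun t ht => Or.inl (hpos t ht).ne')
      (fun t ht => rpow_pos_of_pos (hpos t ht) _) H ht₀ ht₁ ht hs
  · have := H t₀ ht₀ t₁ ht₁ ht (1 / 2) ⟨by norm_num, by norm_num⟩
    rwa [show (1 : ℝ) - 1 / 2 = 1 / 2 by norm_num,
      show 1 / 2 * t₀ + 1 / 2 * t₁ = (t₀ + t₁) / 2 by ring, ← mul_add] at this
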